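/- arXiv:1009.0909 — 7 statements merged into one kernel-verified Lean document; each statement's English description precedes it below -/
import Mathlib

section
/- Let T(n,c) satisfy T(n,c) = T(n-1,c) + (n-1)·T(n-1,c-2) with T(1,c) = 1 and T(n,0) = T(n,1) = 1. Then for all n ≥ 1 and c ≥ 0, T(n,c) ≤ n^c. -/
/-- if `T` satisfies the recurrence
`T(n,c) = T(n-1,c) + (n-1)·T(n-1,c-2)` with `T(1,c) = 1` and
`T(n,0) = T(n,1) = 1`, then `T(n,c) ≤ n^c` for all `n ≥ 1`, `c ≥ 0`. -/
theorem recurrence_le_pow (T : ℕ → ℕ → ℕ)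
    (hbase : ∀ c, T 1 c = 1)
    (hzero : ∀ n, 1 ≤ n → T n 0 = 1)
    (hone : ∀ n, 1 ≤ n → T n 1 = 1)
    (hrec : ∀ n c, 2 ≤ n → 2 ≤ c → T n c = T (n - 1) c + (n - 1) * T (n - 1) (c - 2)) :
    ∀ n c : ℕ, 1 ≤ n → T n c ≤ n ^ c := by
  intro n
  induction n with
  | zero => intro c h; omega
  | succ m ih =>
    intro c hn
    rcases Nat.lt_or_ge m 1 with hm | hm
    · interval_cases m
      simp [hbase]
    · -- m ≥ 1, so m+1 ≥ 2
      rcases Nat.lt_or_ge c 2 with hc | hc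
      · interval_cases c
        · simp [hzero (m+1) (by omega)]
        · simp [hone (m+1) (by omega)]
      · have h := hrec (m+1) c (by omega) hc
        simp only [Nat.add_sub_cancel] at h
        rw [h]
        have h1 := ih c hm
        have h2 := ih (c-2) hm
        have key : m ^ c + m * m ^ (c - 2) ≤ (m+1) ^ c := by
          have hc2 : c - 2 + 1 = c - 1 := by omega
          have hc1 : c - 1 + 1 = c := by omega
          calc m ^ c + m * m ^ (c - 2)
              ≤ m ^ c + m ^ (c-1) := by
                rw [← pow_succ']
                rw [hc2]
            _ = m ^ (c-1) * (m + 1) := by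
                rw [mul_add, mul_one, ← pow_succ, hc1, add_comm]
            _ ≤ (m+1) ^ (c-1) * (m+1) := by
                gcongr; omega
            _ = (m+1) ^ c := by rw [← pow_succ, hc1]
        calc T m c + m * T m (c-2) ≤ m ^ c + m * m ^ (c-2) := by gcongr
          _ ≤ (m+1) ^ c := key
end

section
/- If two compatibly leaf-labeled pedigrees are isomorphic, then the pedigree isomorphism between them is unique. -/
/-- A pedigree: a DAG in which every vertex has in-degree 0 or 2, with genders,
a set `X` of labeled individuals and an injective labeling of `X`. -/
structure Pedigree (V : Type*) [Fintype V] where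
  E : Set (V × V)
  gender : V → Bool
  X : Set V
  lbl : V → ℕ
  lbl_inj : Set.InjOn lbl X
  acyclic : ∃ f : V → ℕ, ∀ e ∈ E, f e.1 < f e.2
  indeg : ∀ v : V, {u | (u, v) ∈ E}.ncard = 0 ∨ {u | (u, v) ∈ E}.ncard = 2
  parents : ∀ a b v : V, (a, v) ∈ E → (b, v) ∈ E → a ≠ b → gender a ≠ gender b

/-- A pedigree matching: an injective partial map preserving genders, mapping
identically-labeled individuals to one another. -/
structure Matching {V V' : Type*} [Fintype V] [Fintype V']
    (P : Pedigree V) (P' : Pedigree V') where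
  toFun : V → Option V'
  inj : ∀ u v w, toFun u = some w → toFun v = some w → u = v
  gender : ∀ u w, toFun u = some w → P.gender u = P'.gender w
  labels : ∀ x ∈ P.X, ∀ x' ∈ P'.X, P.lbl x = P'.lbl x' → toFun x = some x'

variable {V V' : Type*} [Fintype V] [Fintype V']

/-- The set `W_M` of edges of `P` well-matched by `M`. -/
def wellMatched (P : Pedigree V) (P' : Pedigree V') (M : Matching P P') : Set (V × V) :=
  {e ∈ P.E | ∃ a b, M.toFun e.1 = some a ∧ M.toFun e.2 = some b ∧ (a, b) ∈ P'.E}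

/-- The image `M(W_M)` of the well-matched edges inside `E(P')`. -/
def imgWellMatched (P : Pedigree V) (P' : Pedigree V') (M : Matching P P') : Set (V' × V') :=
  {e' ∈ P'.E | ∃ u v, (u, v) ∈ P.E ∧ M.toFun u = some e'.1 ∧ M.toFun v = some e'.2}

/-- The match distance `d(M) = |E(P) - W_M| + |E(P') - M(W_M)|`. -/
noncomputable def matchDist (P : Pedigree V) (P' : Pedigree V') (M : Matching P P') : ℕ :=
  (P.E \ wellMatched P P' M).ncard + (P'.E \ imgWellMatched P P' M).ncard

/-- The edit distance: the minimum match distance over all matchings. -/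
noncomputable def editDist (P : Pedigree V) (P' : Pedigree V') : ℕ :=
  sInf {d | ∃ M : Matching P P', matchDist P P' M = d}

/-- A leaf individual: out-degree zero. -/
def IsLeaf (P : Pedigree V) (v : V) : Prop := ∀ w, (v, w) ∉ P.E

/-- A pedigree is leaf-labeled if its labeled set is exactly its set of leaves. -/
def LeafLabeled (P : Pedigree V) : Prop := P.X = {v | IsLeaf P v}

/-- A pedigree isomorphism: a bijection of the vertices preserving genders,
labels of labeled individuals, and edges in both directions. -/
def IsPedIso (P : Pedigree V) (P' : Pedigree V') (φ : V ≃ V') : Prop :=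
  (∀ v : V, P.gender v = P'.gender (φ v)) ∧
  (∀ x ∈ P.X, ∀ x' ∈ P'.X, P.lbl x = P'.lbl x' → φ x = x') ∧
  (∀ u v : V, (u, v) ∈ P.E ↔ (φ u, φ v) ∈ P'.E)

/-- between two compatibly leaf-labeled pedigrees in which every
vertex is an ancestor of some leaf, a pedigree isomorphism, if it exists, is unique. -/
theorem pedIso_unique (P : Pedigree V) (P' : Pedigree V')
    (hL : LeafLabeled P) (hL' : LeafLabeled P')
    (hcompat : P.lbl '' P.X = P'.lbl '' P'.X)
    (hanc : ∀ v : V, ∃ l, IsLeaf P l ∧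
      Relation.ReflTransGen (fun a b => (a, b) ∈ P.E) v l)
    (hanc' : ∀ v : V', ∃ l, IsLeaf P' l ∧
      Relation.ReflTransGen (fun a b => (a, b) ∈ P'.E) v l)
    (φ ψ : V ≃ V') (hφ : IsPedIso P P' φ) (hψ : IsPedIso P P' ψ) :
    φ = ψ := by
  apply Equiv.ext
  intro v
  obtain ⟨l, hl, hpath⟩ := hanc v
  -- show agreement along the path by head induction
  induction hpath using Relation.ReflTransGen.head_induction_on with
  | refl =>
    -- l is a leaf, hence labeled
    have hlX : l ∈ P.X := by rw [hL]; exact hl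
    have : P.lbl l ∈ P'.lbl '' P'.X := by
      rw [← hcompat]; exact ⟨l, hlX, rfl⟩
    obtain ⟨x', hx', hlbl⟩ := this
    have h1 := hφ.2.1 l hlX x' hx' hlbl.symm
    have h2 := hψ.2.1 l hlX x' hx' hlbl.symm
    rw [h1, h2]
  | head hab _ ih =>
    rename_i a b _
    have e1 : (φ a, φ b) ∈ P'.E := (hφ.2.2 a b).mp hab
    have e2 : (ψ a, ψ b) ∈ P'.E := (hψ.2.2 a b).mp hab
    rw [← ih] at e2
    by_contra hne
    have hg : P'.gender (φ a) = P'.gender (ψ a) := by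
      rw [← hφ.1 a, hψ.1 a]
    exact P'.parents (φ a) (ψ a) (φ b) e1 e2 hne hg
end

section
/- In a pedigree graph in which every non-leaf vertex is an ancestor of some leaf, any pedigree isomorphism between two compatibly leaf-labeled pedigrees preserves the gender-topological-sort total order on vertices; consequently, the order-respecting bijection obtained by pairing vertices in sorted order is an isomorphism whenever any isomorphism exists. -/
variable {V V' : Type*} [Fintype V] [Fintype V']

open Classical

/-- The parent of `v` of gender `g` (using choice; `none` if there is none).
Gender `false` denotes female, `true` denotes male. -/
noncomputable def parentOf (P : Pedigree V) (g : Bool) (v : V) : Option V :=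
  if h : ∃ u, (u, v) ∈ P.E ∧ P.gender u = g then some h.choose else none

/-- Depth-first search backwards along edges from `v`, visiting the female
parent before the male parent, pushing each vertex onto the output list when
its visit finishes, and skipping vertices already output. -/
noncomputable def visit (P : Pedigree V) : ℕ → V → List V → List V
  | 0, _, ord => ord
  | fuel + 1, v, ord =>
    if v ∈ ord then ord
    else
      let o1 := match parentOf P false v with
        | some p => visit P fuel p ord
        | none => ord
      let o2 := match parentOf P true v with
        | some p => visit P fuel p o1
        | none => o1
      o2 ++ [v]

/-- The leaves of `P`, listed in increasing order of their labels. -/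
noncomputable def sortedLeaves (P : Pedigree V) : List V :=
  ((Set.toFinite (P.lbl '' {v | IsLeaf P v})).toFinset.sort (· ≤ ·)).filterMap
    (fun n => if h : ∃ v, IsLeaf P v ∧ P.lbl v = n then some h.choose else none)

/-- The gender topological sort of a leaf-labeled pedigree: perform the
backward DFS from each leaf in increasing label order. -/
noncomputable def gtsort (P : Pedigree V) : List V :=
  (sortedLeaves P).foldl (fun ord l => visit P (Fintype.card V) l ord) []

lemma parent_unique (P : Pedigree V) {u u' v : V} (h : (u, v) ∈ P.E) (h' : (u', v) ∈ P.E)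
    (hg : P.gender u = P.gender u') : u = u' := by
  by_contra hne
  exact (P.parents u u' v h h' hne) hg

lemma parentOf_map (P : Pedigree V) (P' : Pedigree V') (φ : V ≃ V') (h : IsPedIso P P' φ)
    (g : Bool) (v : V) : parentOf P' g (φ v) = Option.map φ (parentOf P g v) := by
  obtain ⟨hg, hlbl, hE⟩ := h
  unfold parentOf
  by_cases hex : ∃ u, (u, v) ∈ P.E ∧ P.gender u = g
  · have hex' : ∃ u, (u, φ v) ∈ P'.E ∧ P'.gender u = g := by
      obtain ⟨u, hu, hgu⟩ := hex
      exact ⟨φ u, (hE u v).1 hu, by rw [← hg]; exact hgu⟩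
    rw [dif_pos hex, dif_pos hex']
    have h1 := hex'.choose_spec
    have h2 := hex.choose_spec
    have key : hex'.choose = φ hex.choose := by
      apply parent_unique P' h1.1 ((hE _ _).1 h2.1)
      rw [h1.2, ← hg, h2.2]
    simp [key]
  · have hex' : ¬ ∃ u, (u, φ v) ∈ P'.E ∧ P'.gender u = g := by
      rintro ⟨u, hu, hgu⟩
      refine hex ⟨φ.symm u, (hE _ _).2 (by simpa using hu), ?_⟩
      rw [hg (φ.symm u)]; simpa using hgu
    rw [dif_neg hex, dif_neg hex']
    rfl

lemma visit_map (P : Pedigree V) (P' : Pedigree V') (φ : V ≃ V') (h : IsPedIso P P' φ) :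
    ∀ (fuel : ℕ) (v : V) (ord : List V),
      visit P' fuel (φ v) (ord.map φ) = (visit P fuel v ord).map φ := by
  intro fuel
  induction fuel with
  | zero => intro v ord; rfl
  | succ n ih =>
    intro v ord
    rw [visit, visit]
    have hmem : φ v ∈ ord.map φ ↔ v ∈ ord := by
      simp [List.mem_map, φ.injective.eq_iff]
    by_cases hv : v ∈ ord
    · rw [if_pos (hmem.2 hv), if_pos hv]
    · rw [if_neg (fun hc => hv (hmem.1 hc)), if_neg hv]
      rw [parentOf_map P P' φ h, parentOf_map P P' φ h]
      cases hpf : parentOf P false v with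
      | none =>
        cases hpt : parentOf P true v with
        | none => simp
        | some p => simp [ih]
      | some p =>
        cases hpt : parentOf P true v with
        | none => simp [ih]
        | some q => simp [ih]

lemma sortedLeaves_map (P : Pedigree V) (P' : Pedigree V') (φ : V ≃ V')
    (h : IsPedIso P P' φ) (hL : LeafLabeled P) (hL' : LeafLabeled P')
    (hcompat : P.lbl '' P.X = P'.lbl '' P'.X) :
    (sortedLeaves P).map φ = sortedLeaves P' := by
  have hS : P.lbl '' {v | IsLeaf P v} = P'.lbl '' {v | IsLeaf P' v} := by
    rw [← hL, ← hL']; exact hcompat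
  unfold sortedLeaves
  rw [List.map_filterMap]
  have hfin : (Set.toFinite (P.lbl '' {v | IsLeaf P v})).toFinset
      = (Set.toFinite (P'.lbl '' {v | IsLeaf P' v})).toFinset :=
    Set.Finite.toFinset_inj.mpr hS
  rw [hfin]
  congr 1
  funext n
  by_cases hn : ∃ v, IsLeaf P v ∧ P.lbl v = n
  · obtain ⟨hv1, hv2⟩ := hn.choose_spec
    have hn' : ∃ v, IsLeaf P' v ∧ P'.lbl v = n := by
      have : n ∈ P'.lbl '' {v | IsLeaf P' v} := hS ▸ ⟨hn.choose, hv1, hv2⟩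
      obtain ⟨w, hw, hwn⟩ := this
      exact ⟨w, hw, hwn⟩
    rw [dif_pos hn, dif_pos hn']
    obtain ⟨hw1, hw2⟩ := hn'.choose_spec
    have key : φ hn.choose = hn'.choose := by
      apply h.2.1 hn.choose (by rw [hL]; exact hv1) hn'.choose (by rw [hL']; exact hw1)
      rw [hv2, hw2]
    simp [key]
  · have hn' : ¬ ∃ v, IsLeaf P' v ∧ P'.lbl v = n := by
      rintro ⟨w, hw, hwn⟩
      have : n ∈ P.lbl '' {v | IsLeaf P v} := hS.symm ▸ ⟨w, hw, hwn⟩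
      obtain ⟨u, hu, hun⟩ := this
      exact hn ⟨u, hu, hun⟩
    rw [dif_neg hn, dif_neg hn']
    rfl

lemma gtsort_map (P : Pedigree V) (P' : Pedigree V') (φ : V ≃ V')
    (h : IsPedIso P P' φ) (hL : LeafLabeled P) (hL' : LeafLabeled P')
    (hcompat : P.lbl '' P.X = P'.lbl '' P'.X) :
    (gtsort P).map (fun v => φ v) = gtsort P' := by
  have hcard : Fintype.card V' = Fintype.card V := (Fintype.card_congr φ).symm
  unfold gtsort
  rw [← sortedLeaves_map P P' φ h hL hL' hcompat, hcard]
  have key : ∀ (L : List V) (ord : List V),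
      (L.map φ).foldl (fun ord l => visit P' (Fintype.card V) l ord) (ord.map φ)
        = (L.foldl (fun ord l => visit P (Fintype.card V) l ord) ord).map φ := by
    intro L
    induction L with
    | nil => intro ord; rfl
    | cons a t ih =>
      intro ord
      simp only [List.map_cons, List.foldl_cons]
      rw [visit_map P P' φ h, ih]
  simpa using (key (sortedLeaves P) []).symm

/-- for compatibly leaf-labeled pedigrees in which every non-leaf
vertex is an ancestor of some leaf, every pedigree isomorphism maps the gender
topological sort of `P` to that of `P'`; consequently, whenever some
isomorphism exists, the bijection pairing vertices in sorted order is one. -/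
theorem gtsort_canonical (P : Pedigree V) (P' : Pedigree V')
    (hL : LeafLabeled P) (hL' : LeafLabeled P')
    (hcompat : P.lbl '' P.X = P'.lbl '' P'.X)
    (hanc : ∀ v : V, ∃ l, IsLeaf P l ∧
      Relation.ReflTransGen (fun a b => (a, b) ∈ P.E) v l)
    (hanc' : ∀ v : V', ∃ l, IsLeaf P' l ∧
      Relation.ReflTransGen (fun a b => (a, b) ∈ P'.E) v l) :
    (∀ φ : V ≃ V', IsPedIso P P' φ → (gtsort P).map (fun v => φ v) = gtsort P') ∧
    ((∃ φ : V ≃ V', IsPedIso P P' φ) →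
      ∃ φ : V ≃ V', IsPedIso P P' φ ∧ (gtsort P).map (fun v => φ v) = gtsort P') := by
  refine ⟨fun φ hiso => gtsort_map P P' φ hiso hL hL' hcompat, ?_⟩
  rintro ⟨φ, hiso⟩
  exact ⟨φ, hiso, gtsort_map P P' φ hiso hL hL' hcompat⟩
end

section
/- If two bipartite graphs G = (V1 ∪ V2, E) and G' = (V1' ∪ V2', E') with no isolated vertices are isomorphic (via an isomorphism respecting the bipartition sides), then the pedigrees P(G) and P(G') obtained from the reduction are isomorphic as pedigrees. -/
/-- Vertices of the pedigree `P(G)` built from a bipartite graph `G`: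
`founder u s` is `u^s`, `child u v s` is `(u,v)^s`, `grand u u' v` is
`(u,u',v)^f`. Gender `false` is female, `true` is male. -/
inductive RV (V1 V2 : Type*) : Type _
  | founder : V1 → Bool → RV V1 V2
  | child : V1 → V2 → Bool → RV V1 V2
  | grand : V1 → V1 → V2 → RV V1 V2

variable {V1 V2 V1' V2' : Type*}

/-- The vertices that actually occur in `P(G)` for adjacency relation `A`. -/
def RValid (A : V1 → V2 → Prop) : RV V1 V2 → Prop
  | .founder u _ => ∃ v, A u v
  | .child u v _ => A u v
  | .grand u u' v => A u v ∧ A u' v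

/-- The edges of `P(G)`: `u^s → (u,v)^{s'}` for each edge `(u,v)` and genders
`s, s'`, and `(u,v)^m → (u,u',v)^f`, `(u',v)^f → (u,u',v)^f`. -/
def REdge : RV V1 V2 → RV V1 V2 → Prop
  | .founder u _, .child w _ _ => u = w
  | .child u v s, .grand a b w => v = w ∧ ((s = true ∧ a = u) ∨ (s = false ∧ b = u))
  | _, _ => False

/-- Genders in `P(G)`. -/
def RGender : RV V1 V2 → Bool
  | .founder _ s => s
  | .child _ _ s => s
  | .grand _ _ _ => false

/-- The vertex set of the pedigree `P(G)`. -/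
def PV (A : V1 → V2 → Prop) : Type _ := {x : RV V1 V2 // RValid A x}

namespace RV

def map (f : V1 → V1') (g : V2 → V2') : RV V1 V2 → RV V1' V2'
  | .founder u s => .founder (f u) s
  | .child u v s => .child (f u) (g v) s
  | .grand u u' v => .grand (f u) (f u') (g v)

def mapEquiv (α : V1 ≃ V1') (β : V2 ≃ V2') : RV V1 V2 ≃ RV V1' V2' where
  toFun := map α β
  invFun := map α.symm β.symm
  left_inv x := by cases x <;> simp [map]
  right_inv x := by cases x <;> simp [map]

theorem rGender_map (f : V1 → V1') (g : V2 → V2') (x : RV V1 V2) :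
    RGender (map f g x) = RGender x := by
  cases x <;> rfl

theorem rEdge_map_iff {f : V1 → V1'} {g : V2 → V2'} (hf : f.Injective) (hg : g.Injective)
    (a b : RV V1 V2) : REdge (map f g a) (map f g b) ↔ REdge a b := by
  cases a <;> cases b <;> simp [map, REdge, hf.eq_iff, hg.eq_iff]

theorem rValid_map_iff {A : V1 → V2 → Prop} {A' : V1' → V2' → Prop} {α : V1 → V1'}
    (β : V2 ≃ V2') (hA : ∀ u v, A u v ↔ A' (α u) (β v)) (x : RV V1 V2) :
    RValid A' (map α β x) ↔ RValid A x := by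
  cases x with
  | founder u s => simpa only [map, RValid, hA] using β.surjective.exists
  | child u v s => exact (hA u v).symm
  | grand u u' v => simp only [map, RValid, hA]

end RV

def PV.congr {A : V1 → V2 → Prop} {A' : V1' → V2' → Prop} (α : V1 ≃ V1') (β : V2 ≃ V2')
    (hA : ∀ u v, A u v ↔ A' (α u) (β v)) : PV A ≃ PV A' :=
  (RV.mapEquiv α β).subtypeEquiv fun x => (RV.rValid_map_iff β hA x).symm

theorem reduction_forward_general
    (A : V1 → V2 → Prop) (A' : V1' → V2' → Prop)
    (α : V1 ≃ V1') (β : V2 ≃ V2') (hiso : ∀ u v, A u v ↔ A' (α u) (β v)) :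
    ∃ φ : PV A ≃ PV A',
      (∀ a b : PV A, REdge a.val b.val ↔ REdge (φ a).val (φ b).val) ∧
      (∀ x : PV A, RGender x.val = RGender (φ x).val) :=
  ⟨PV.congr α β hiso, fun a b => (RV.rEdge_map_iff α.injective β.injective a.val b.val).symm,
    fun x => (RV.rGender_map α β x.val).symm⟩

/-- if two bipartite graphs with no isolated vertices are
isomorphic (respecting sides), then the pedigrees `P(G)` and `P(G')` are
isomorphic as pedigrees (a bijection preserving edges and genders). -/
theorem reduction_forward [Fintype V1] [Fintype V2] [Fintype V1'] [Fintype V2']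
    (A : V1 → V2 → Prop) (A' : V1' → V2' → Prop)
    (hno1 : ∀ u : V1, ∃ v, A u v) (hno2 : ∀ v : V2, ∃ u, A u v)
    (hno1' : ∀ u : V1', ∃ v, A' u v) (hno2' : ∀ v : V2', ∃ u, A' u v)
    (α : V1 ≃ V1') (β : V2 ≃ V2') (hiso : ∀ u v, A u v ↔ A' (α u) (β v)) :
    ∃ φ : PV A ≃ PV A',
      (∀ a b : PV A, REdge a.val b.val ↔ REdge (φ a).val (φ b).val) ∧
      (∀ x : PV A, RGender x.val = RGender (φ x).val) :=
  reduction_forward_general A A' α β hiso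
end

section
/- Conversely, if the pedigrees P(G) and P(G') obtained from the reduction are isomorphic, then the bipartite graphs G and G' (with no isolated vertices) are isomorphic. -/
variable {V1 V2 V1' V2' : Type*}

structure PedigreeIso (A : V1 → V2 → Prop) (A' : V1' → V2' → Prop) where
  toEquiv : PV A ≃ PV A'
  map_edge : ∀ a b : PV A, REdge a.val b.val ↔ REdge (toEquiv a).val (toEquiv b).val
  map_gender : ∀ x : PV A, RGender x.val = RGender (toEquiv x).val

def RV.gen : RV V1 V2 → ℕ
  | .founder .. => 0
  | .child .. => 1
  | .grand .. => 2

lemma RV.gen_le_two (x : RV V1 V2) : x.gen ≤ 2 := by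
  cases x <;> simp [RV.gen]

lemma REdge.child_fst_eq_of_common_parent {p : RV V1 V2} {a a' : V1} {w w' : V2} {s s' : Bool}
    (h : REdge p (.child a w s)) (h' : REdge p (.child a' w' s')) : a = a' := by
  cases p <;> simp_all [REdge]

lemma REdge.child_snd_eq_of_common_child {c : RV V1 V2} {a a' : V1} {w w' : V2}
    (h : REdge (.child a w true) c) (h' : REdge (.child a' w' false) c) : w = w' := by
  cases c <;> simp_all [REdge]

section
variable {A : V1 → V2 → Prop}

lemma PV.exists_parent_iff (x : PV A) : (∃ p : PV A, REdge p.val x.val) ↔ x.val.gen ≠ 0 := by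
  obtain ⟨_ | ⟨u, v, s⟩ | ⟨u, u', v⟩, hx⟩ := x
  · simp [REdge, RV.gen]
  · exact iff_of_true ⟨⟨.founder u true, v, hx⟩, by simp [REdge]⟩ (by simp [RV.gen])
  · exact iff_of_true ⟨⟨.child u v true, hx.1⟩, by simp [REdge]⟩ (by simp [RV.gen])

lemma PV.exists_child_iff (x : PV A) : (∃ c : PV A, REdge x.val c.val) ↔ x.val.gen ≠ 2 := by
  obtain ⟨⟨u, s⟩ | ⟨u, v, s⟩ | _, hx⟩ := x
  · obtain ⟨v, huv⟩ := hx
    exact iff_of_true ⟨⟨.child u v true, huv⟩, by simp [REdge]⟩ (by simp [RV.gen])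
  · exact iff_of_true ⟨⟨.grand u u v, hx, hx⟩, by cases s <;> simp [REdge]⟩ (by simp [RV.gen])
  · simp [REdge, RV.gen]

end

namespace PedigreeIso

variable {A : V1 → V2 → Prop} {A' : V1' → V2' → Prop}

instance : CoeFun (PedigreeIso A A') (fun _ => PV A → PV A') := ⟨fun e => e.toEquiv⟩

def symm (e : PedigreeIso A A') : PedigreeIso A' A where
  toEquiv := e.toEquiv.symm
  map_edge a b := by simpa using (e.map_edge (e.toEquiv.symm a) (e.toEquiv.symm b)).symm
  map_gender x := by simpa using (e.map_gender (e.toEquiv.symm x)).symm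

lemma symm_apply_apply (e : PedigreeIso A A') (x : PV A) : e.symm (e x) = x :=
  e.toEquiv.symm_apply_apply x

lemma exists_parent_iff (e : PedigreeIso A A') (x : PV A) :
    (∃ p : PV A', REdge p.val (e x).val) ↔ ∃ p : PV A, REdge p.val x.val := by
  rw [e.toEquiv.surjective.exists]
  exact exists_congr fun p => (e.map_edge p x).symm

lemma exists_child_iff (e : PedigreeIso A A') (x : PV A) :
    (∃ c : PV A', REdge (e x).val c.val) ↔ ∃ c : PV A, REdge x.val c.val := by
  rw [e.toEquiv.surjective.exists]
  exact exists_congr fun c => (e.map_edge x c).symm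

lemma gen_apply (e : PedigreeIso A A') (x : PV A) : (e x).val.gen = x.val.gen := by
  have h0 := (e.exists_parent_iff x).trans x.exists_parent_iff
  have h2 := (e.exists_child_iff x).trans x.exists_child_iff
  rw [PV.exists_parent_iff] at h0
  rw [PV.exists_child_iff] at h2
  have := (e x).val.gen_le_two
  have := x.val.gen_le_two
  omega

def ActsOnChildren (e : PedigreeIso A A') (f : V1 → V1') (g : V2 → V2') : Prop :=
  ∀ u v s (h : A u v), (e ⟨.child u v s, h⟩).val = .child (f u) (g v) s

lemma exists_apply_child (e : PedigreeIso A A') {u : V1} {v : V2} (s : Bool) (h : A u v) :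
    ∃ a w, (e ⟨.child u v s, h⟩).val = .child a w s := by
  have hgen := e.gen_apply ⟨.child u v s, h⟩
  have hgender := e.map_gender ⟨.child u v s, h⟩
  rcases hx : (e ⟨.child u v s, h⟩).val with _ | ⟨a, w, s'⟩ | _
  · simp [hx, RV.gen] at hgen
  · simp only [hx, RGender] at hgender
    exact ⟨a, w, by rw [hgender]⟩
  · simp [hx, RV.gen] at hgen

lemma exists_actsOnChildren (e : PedigreeIso A A')
    (hno1 : ∀ u, ∃ v, A u v) (hno2 : ∀ v, ∃ u, A u v) :
    ∃ f g, e.ActsOnChildren f g := by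
  choose a w hmap using fun u v s (h : A u v) => e.exists_apply_child s h
  have ha : ∀ u v v' s s' (h : A u v) (h' : A u v'), a u v s h = a u v' s' h' := by
    intro u v v' s s' h h'
    have hp := (e.map_edge ⟨.founder u true, v, h⟩ ⟨.child u v s, h⟩).1 (by simp [REdge])
    have hp' := (e.map_edge ⟨.founder u true, v, h⟩ ⟨.child u v' s', h'⟩).1 (by simp [REdge])
    rw [hmap] at hp hp'
    exact hp.child_fst_eq_of_common_parent hp'
  have hw : ∀ u u' v (h : A u v) (h' : A u' v), w u v true h = w u' v false h' := by
    intro u u' v h h'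
    have hc := (e.map_edge ⟨.child u v true, h⟩ ⟨.grand u u' v, h, h'⟩).1 (by simp [REdge])
    have hc' := (e.map_edge ⟨.child u' v false, h'⟩ ⟨.grand u u' v, h, h'⟩).1 (by simp [REdge])
    rw [hmap] at hc hc'
    exact hc.child_snd_eq_of_common_child hc'
  have hw' : ∀ u u' v s (h : A u v) (h' : A u' v), w u v s h = w u' v false h' := by
    rintro u u' v (_ | _) h h'
    · exact (hw u' u v h' h).symm.trans (hw u' u' v h' h')
    · exact hw u u' v h h'
  refine ⟨fun u => a u _ true (hno1 u).choose_spec, fun v => w _ v false (hno2 v).choose_spec,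
    fun u v s h => ?_⟩
  rw [hmap, ha u v _ s true h, hw' u _ v s h]

lemma adj_of_actsOnChildren (e : PedigreeIso A A') {f : V1 → V1'} {g : V2 → V2'}
    (hfg : e.ActsOnChildren f g) {u : V1} {v : V2} (h : A u v) : A' (f u) (g v) := by
  have := (e ⟨.child u v true, h⟩).property
  rwa [hfg u v true h] at this

lemma leftInverse_of_actsOnChildren (e : PedigreeIso A A') {f : V1 → V1'} {g : V2 → V2'}
    {f' : V1' → V1} {g' : V2' → V2} (hfg : e.ActsOnChildren f g)
    (hfg' : e.symm.ActsOnChildren f' g')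
    {u : V1} {v : V2} (h : A u v) : f' (f u) = u ∧ g' (g v) = v := by
  have hx : e ⟨.child u v true, h⟩ = ⟨.child (f u) (g v) true, e.adj_of_actsOnChildren hfg h⟩ :=
    Subtype.ext (hfg u v true h)
  have := congrArg Subtype.val (e.symm_apply_apply ⟨.child u v true, h⟩)
  rw [hx, hfg'] at this
  simpa only [RV.child.injEq, and_true] using this

end PedigreeIso

theorem reduction_backward_general
    (A : V1 → V2 → Prop) (A' : V1' → V2' → Prop)
    (hno1 : ∀ u : V1, ∃ v, A u v) (hno2 : ∀ v : V2, ∃ u, A u v)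
    (hno1' : ∀ u : V1', ∃ v, A' u v) (hno2' : ∀ v : V2', ∃ u, A' u v)
    (hped : ∃ φ : PV A ≃ PV A',
      (∀ a b : PV A, REdge a.val b.val ↔ REdge (φ a).val (φ b).val) ∧
      (∀ x : PV A, RGender x.val = RGender (φ x).val)) :
    ∃ (α : V1 ≃ V1') (β : V2 ≃ V2'), ∀ u v, A u v ↔ A' (α u) (β v) := by
  obtain ⟨φ, hE, hG⟩ := hped
  let e : PedigreeIso A A' := ⟨φ, hE, hG⟩
  obtain ⟨f, g, hfg⟩ := e.exists_actsOnChildren hno1 hno2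
  obtain ⟨f', g', hfg'⟩ := e.symm.exists_actsOnChildren hno1' hno2'
  have inv {u v} (h : A u v) := e.leftInverse_of_actsOnChildren hfg hfg' h
  have inv' {u v} (h : A' u v) := e.symm.leftInverse_of_actsOnChildren hfg' hfg h
  let α : V1 ≃ V1' :=
    ⟨f, f', fun u => (inv (hno1 u).choose_spec).1, fun u => (inv' (hno1' u).choose_spec).1⟩
  let β : V2 ≃ V2' :=
    ⟨g, g', fun v => (inv (hno2 v).choose_spec).2, fun v => (inv' (hno2' v).choose_spec).2⟩
  refine ⟨α, β, fun u v => ⟨e.adj_of_actsOnChildren hfg, fun h => ?_⟩⟩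
  have : A (α.symm (α u)) (β.symm (β v)) := e.symm.adj_of_actsOnChildren hfg' h
  rwa [α.symm_apply_apply, β.symm_apply_apply] at this

/-- conversely, if the pedigrees `P(G)` and `P(G')` are
isomorphic as pedigrees, then the bipartite graphs `G` and `G'` (with no
isolated vertices) are isomorphic. -/
theorem reduction_backward [Fintype V1] [Fintype V2] [Fintype V1'] [Fintype V2']
    (A : V1 → V2 → Prop) (A' : V1' → V2' → Prop)
    (hno1 : ∀ u : V1, ∃ v, A u v) (hno2 : ∀ v : V2, ∃ u, A u v)
    (hno1' : ∀ u : V1', ∃ v, A' u v) (hno2' : ∀ v : V2', ∃ u, A' u v)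
    (hped : ∃ φ : PV A ≃ PV A',
      (∀ a b : PV A, REdge a.val b.val ↔ REdge (φ a).val (φ b).val) ∧
      (∀ x : PV A, RGender x.val = RGender (φ x).val)) :
    ∃ (α : V1 ≃ V1') (β : V2 ≃ V2'), ∀ u v, A u v ↔ A' (α u) (β v) :=
  reduction_backward_general A A' hno1 hno2 hno1' hno2' hped
end

section
/- Let P and P' be connected two-generation pedigrees with compatibly labeled leaves, with the matching M fixed on the leaf generation by the labels. For each gender s ∈ {m,f}, form the complete bipartite graph G^s between the gender-s founders of P and of P', with edge weight w(u,v) equal to the number of children of u matched by M to children of v. If M^f and M^m are perfect matchings in G^f and G^m, then extending M by these matchings yields a matching M̄ whose number of well-matched edges equals the total weight of M^f plus the total weight of M^m. -/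
/-- two-generation compatibly leaf-labeled pedigrees. Founders
are `Fm ⊕ Ff` (males/females) for `P` and `Fm' ⊕ Ff'` for `P'`; the common
labeled leaves are identified as the type `L` (so the leaf matching is the
identity). Every leaf has exactly one male and one female parent. If `σm, σf`
are perfect matchings of the male resp. female founders, then the number of
edges well-matched by the extended matching equals the total bipartite-matching
weight, where the weight of `(u, u')` is the number of children of `u` matched
to children of `u'`. -/
theorem twoGen_wellMatched_eq_weight
    {Fm Ff Fm' Ff' L : Type*} [Fintype Fm] [Fintype Ff] [Fintype Fm']
    [Fintype Ff'] [Fintype L]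
    (Ep : Set ((Fm ⊕ Ff) × L)) (Ep' : Set ((Fm' ⊕ Ff') × L))
    (hP : ∀ c : L, (∃! u : Fm, (Sum.inl u, c) ∈ Ep) ∧ (∃! u : Ff, (Sum.inr u, c) ∈ Ep))
    (hP' : ∀ c : L, (∃! u : Fm', (Sum.inl u, c) ∈ Ep') ∧ (∃! u : Ff', (Sum.inr u, c) ∈ Ep'))
    (σm : Fm ≃ Fm') (σf : Ff ≃ Ff') :
    {e ∈ Ep | (Sum.map (⇑σm) (⇑σf) e.1, e.2) ∈ Ep'}.ncard
      = (∑ u : Fm, {c : L | (Sum.inl u, c) ∈ Ep ∧ (Sum.inl (σm u), c) ∈ Ep'}.ncard)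
      + ∑ u : Ff, {c : L | (Sum.inr u, c) ∈ Ep ∧ (Sum.inr (σf u), c) ∈ Ep'}.ncard := by
  classical
  have e : {e : (Fm ⊕ Ff) × L // e ∈ Ep ∧ (Sum.map (⇑σm) (⇑σf) e.1, e.2) ∈ Ep'} ≃
      (Σ u : Fm, {c : L // (Sum.inl u, c) ∈ Ep ∧ (Sum.inl (σm u), c) ∈ Ep'}) ⊕
      (Σ u : Ff, {c : L // (Sum.inr u, c) ∈ Ep ∧ (Sum.inr (σf u), c) ∈ Ep'}) :=
  { toFun := fun x =>
      match x with
      | ⟨(Sum.inl u, c), h⟩ => Sum.inl ⟨u, c, h⟩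
      | ⟨(Sum.inr u, c), h⟩ => Sum.inr ⟨u, c, h⟩
    invFun := fun x =>
      match x with
      | Sum.inl ⟨u, c, h⟩ => ⟨(Sum.inl u, c), h⟩
      | Sum.inr ⟨u, c, h⟩ => ⟨(Sum.inr u, c), h⟩
    left_inv := by rintro ⟨⟨u | u, c⟩, h⟩ <;> rfl
    right_inv := by rintro (⟨u, c, h⟩ | ⟨u, c, h⟩) <;> rfl }
  calc {e ∈ Ep | (Sum.map (⇑σm) (⇑σf) e.1, e.2) ∈ Ep'}.ncard
      = Nat.card {e : (Fm ⊕ Ff) × L // e ∈ Ep ∧ (Sum.map (⇑σm) (⇑σf) e.1, e.2) ∈ Ep'} :=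
        (Nat.card_coe_set_eq _).symm
    _ = Nat.card ((Σ u : Fm, {c : L // (Sum.inl u, c) ∈ Ep ∧ (Sum.inl (σm u), c) ∈ Ep'}) ⊕
          (Σ u : Ff, {c : L // (Sum.inr u, c) ∈ Ep ∧ (Sum.inr (σf u), c) ∈ Ep'})) :=
        Nat.card_congr e
    _ = _ := by
        rw [Nat.card_sum]
        simp only [Nat.card_eq_fintype_card, Fintype.card_sigma]
        congr 1 <;> exact Finset.sum_congr rfl fun u _ => by
          rw [← Nat.card_coe_set_eq, Nat.card_eq_fintype_card]
          exact Fintype.card_congr (Equiv.refl _)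
end

section
/- Let a pedigree graph be a DAG with all in-degrees 0 or 2 and opposite-gender parents. Then the graph obtained from a rooted directed tree T by declaring all tree vertices female and adding, for each internal (non-leaf) vertex v of T, a new male founder vertex v* with an edge from v* to each child of v, is a valid monogamous pedigree graph with exactly twice as many edges as T. -/
variable {V : Type*} [Fintype V]

/-- Vertices of the pedigree built from a rooted tree `T` with edge set `ET`:
the tree vertices (all female), plus a male founder `v*` for each internal
(non-leaf) vertex `v`. -/
def DV (ET : Set (V × V)) : Type _ := V ⊕ {v : V // ∃ c, (v, c) ∈ ET}

/-- Edges of the constructed pedigree: each tree edge `(u, c)` yields the two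
edges `u → c` and `u* → c`. -/
def DRel (ET : Set (V × V)) : DV ET → DV ET → Prop
  | Sum.inl u, Sum.inl c => (u, c) ∈ ET
  | Sum.inr u, Sum.inl c => (u.val, c) ∈ ET
  | _, _ => False

/-- Genders: tree vertices are female (`false`), starred vertices male (`true`). -/
def DGender (ET : Set (V × V)) : DV ET → Bool
  | Sum.inl _ => false
  | Sum.inr _ => true

instance (ET : Set (V × V)) : Finite (DV ET) := by
  unfold DV; infer_instance

-- helper: uniqueness of parents
theorem par_unique (ET : Set (V × V)) (r : V)
    (hroot : ∀ u, (u, r) ∉ ET)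
    (hindeg : ∀ v, v ≠ r → {u | (u, v) ∈ ET}.ncard = 1) :
    ∀ c u w, (u, c) ∈ ET → (w, c) ∈ ET → u = w := by
  intro c u w hu hw
  have hc : c ≠ r := fun h => hroot u (h ▸ hu)
  obtain ⟨p, hp⟩ := Set.ncard_eq_one.mp (hindeg c hc)
  have h1 : u ∈ {u | (u, c) ∈ ET} := hu
  have h2 : w ∈ {u | (u, c) ∈ ET} := hw
  rw [hp] at h1 h2
  simp at h1 h2; rw [h1, h2]

/-- for a rooted directed tree `T`, the construction (all tree
vertices female, a male founder `v*` added for each internal vertex `v`, with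
an edge from `v*` to each child of `v`) is a valid monogamous pedigree graph
with exactly twice as many edges as `T`. -/
theorem tree_to_monogamous_pedigree (ET : Set (V × V)) (r : V)
    (hacyc : ∃ f : V → ℕ, ∀ e ∈ ET, f e.1 < f e.2)
    (hroot : ∀ u, (u, r) ∉ ET)
    (hindeg : ∀ v, v ≠ r → {u | (u, v) ∈ ET}.ncard = 1)
    (hreach : ∀ v, Relation.ReflTransGen (fun a b => (a, b) ∈ ET) r v) :
    (∃ f : DV ET → ℕ, ∀ a b, DRel ET a b → f a < f b) ∧
    (∀ x : DV ET, {y | DRel ET y x}.ncard = 0 ∨ {y | DRel ET y x}.ncard = 2) ∧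
    (∀ a b x : DV ET, DRel ET a x → DRel ET b x → a ≠ b →
      DGender ET a ≠ DGender ET b) ∧
    (∀ a : DV ET,
      {b : DV ET | b ≠ a ∧ ∃ c, DRel ET a c ∧ DRel ET b c}.ncard ≤ 1) ∧
    {p : DV ET × DV ET | DRel ET p.1 p.2}.ncard = 2 * ET.ncard := by
  obtain ⟨f, hf⟩ := hacyc
  have huniq := par_unique ET r hroot hindeg
  refine ⟨?_, ?_, ?_, ?_, ?_⟩
  · refine ⟨fun x => match x with
      | Sum.inl v => f v + 1
      | Sum.inr u => f u.val, ?_⟩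
    rintro (u | u) (c | c) h <;> simp [DRel] at h <;> simp
    · exact hf _ h
    · exact (hf _ h).le
  · rintro (c | w)
    · by_cases hc : ∃ u, (u, c) ∈ ET
      · obtain ⟨p, hp⟩ := hc
        right
        have hset : {y | DRel ET y (Sum.inl c)} =
            {Sum.inl p, Sum.inr ⟨p, ⟨c, hp⟩⟩} := by
          ext y
          simp only [Set.mem_insert_iff, Set.mem_singleton_iff, Set.mem_setOf_eq]
          constructor
          · intro hy
            match y, hy with
            | Sum.inl u, hy =>
              exact Or.inl (congrArg Sum.inl (huniq c u p hy hp))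
            | Sum.inr u, hy =>
              exact Or.inr (congrArg Sum.inr (Subtype.ext (huniq c u.val p hy hp)))
          · rintro (rfl | rfl) <;> exact hp
        rw [hset]; exact Set.ncard_pair Sum.inl_ne_inr
      · left
        have : {y | DRel ET y (Sum.inl c)} = ∅ := by
          ext y; rcases y with u | u <;>
            exact ⟨fun h => hc ⟨_, h⟩, False.elim⟩
        simp [this]
    · left
      have : {y | DRel ET y (Sum.inr w)} = ∅ := by
        ext y; rcases y with u | u <;> exact ⟨fun h => (h : False).elim, False.elim⟩
      simp [this]
  · rintro (a | a) (b | b) (x | x) ha hb hne <;> simp [DRel] at ha hb <;>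
      simp [DGender]
    · exact hne (by rw [huniq x a b ha hb])
    · exact hne (congrArg Sum.inr (Subtype.ext (huniq x a.val b.val ha hb)))
  · intro a
    rw [Set.ncard_le_one_iff (Set.toFinite _)]
    rintro b1 b2 ⟨hb1, c1, hac1, hb1c⟩ ⟨hb2, c2, hac2, hb2c⟩
    rcases a with v | v
    · rcases c1 with c1 | c1 <;> simp [DRel] at hac1
      rcases c2 with c2 | c2 <;> simp [DRel] at hac2
      rcases b1 with u1 | u1 <;> simp [DRel] at hb1c
      · exact absurd (congrArg Sum.inl (huniq c1 u1 v hb1c hac1)) hb1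
      rcases b2 with u2 | u2 <;> simp [DRel] at hb2c
      · exact absurd (congrArg Sum.inl (huniq c2 u2 v hb2c hac2)) hb2
      have e1 : u1.val = v := huniq c1 u1.val v hb1c hac1
      have e2 : u2.val = v := huniq c2 u2.val v hb2c hac2
      exact congrArg Sum.inr (Subtype.ext (e1.trans e2.symm))
    · rcases c1 with c1 | c1 <;> simp [DRel] at hac1
      rcases c2 with c2 | c2 <;> simp [DRel] at hac2
      rcases b1 with u1 | u1 <;> simp [DRel] at hb1c
      -- b1 = inl
      ·
        rcases b2 with u2 | u2 <;> simp [DRel] at hb2c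
        · exact congrArg Sum.inl
            ((huniq c1 u1 v.val hb1c hac1).trans (huniq c2 u2 v.val hb2c hac2).symm)
        · exact absurd (congrArg Sum.inr (Subtype.ext (huniq c2 u2.val v.val hb2c hac2))) hb2
      -- b1 = inr
      ·
        exact absurd (congrArg Sum.inr (Subtype.ext (huniq c1 u1.val v.val hb1c hac1))) hb1
  · set S1 : Set (DV ET × DV ET) :=
      {p | ∃ u c, p = (Sum.inl u, Sum.inl c) ∧ (u, c) ∈ ET} with hS1
    set S2 : Set (DV ET × DV ET) :=
      {p | ∃ w c, p = (Sum.inr w, Sum.inl c) ∧ (w.val, c) ∈ ET} with hS2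
    have hcov : {p : DV ET × DV ET | DRel ET p.1 p.2} = S1 ∪ S2 := by
      ext p
      constructor
      · intro h
        match p, h with
        | (Sum.inl u, Sum.inl c), h => exact Or.inl ⟨u, c, rfl, h⟩
        | (Sum.inr u, Sum.inl c), h => exact Or.inr ⟨u, c, rfl, h⟩
      · rintro (⟨u, c, rfl, h⟩ | ⟨w, c, rfl, h⟩) <;> exact h
    have proj : DV ET → V := fun x => match x with
      | Sum.inl v => v
      | Sum.inr u => u.val
    set g : DV ET × DV ET → V × V := fun p =>
      (match p.1 with | Sum.inl v => v | Sum.inr u => u.val,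
       match p.2 with | Sum.inl v => v | Sum.inr u => u.val) with hg
    have himg1 : g '' S1 = ET := by
      ext ⟨u, c⟩
      constructor
      · rintro ⟨p, ⟨u', c', rfl, hm⟩, hgp⟩
        simp [hg] at hgp
        obtain ⟨rfl, rfl⟩ := hgp
        exact hm
      · intro h
        exact ⟨(Sum.inl u, Sum.inl c), ⟨u, c, rfl, h⟩, rfl⟩
    have himg2 : g '' S2 = ET := by
      ext ⟨u, c⟩
      constructor
      · rintro ⟨p, ⟨w', c', rfl, hm⟩, hgp⟩
        simp [hg] at hgp
        obtain ⟨rfl, rfl⟩ := hgp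
        exact hm
      · intro h
        exact ⟨(Sum.inr ⟨u, ⟨c, h⟩⟩, Sum.inl c), ⟨⟨u, ⟨c, h⟩⟩, c, rfl, h⟩, rfl⟩
    have hinj1 : Set.InjOn g S1 := by
      rintro p ⟨u, c, rfl, _⟩ q ⟨u', c', rfl, _⟩ h
      simp [hg] at h
      obtain ⟨rfl, rfl⟩ := h; rfl
    have hinj2 : Set.InjOn g S2 := by
      rintro p ⟨u, c, rfl, _⟩ q ⟨u', c', rfl, _⟩ h
      simp [hg] at h
      obtain ⟨h1, rfl⟩ := h
      cases Subtype.ext h1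
      rfl
    have hdisj : Disjoint S1 S2 := by
      rw [Set.disjoint_left]
      rintro p ⟨u, c, rfl, _⟩ ⟨w, c', hp, _⟩
      exact Sum.inl_ne_inr (congrArg Prod.fst hp)
    have h1 : S1.ncard = ET.ncard := by
      have := Set.ncard_image_of_injOn hinj1
      rw [himg1] at this
      exact this.symm
    have h2 : S2.ncard = ET.ncard := by
      have := Set.ncard_image_of_injOn hinj2
      rw [himg2] at this
      exact this.symm
    rw [hcov, Set.ncard_union_eq hdisj (Set.toFinite _) (Set.toFinite _), h1, h2]
    ring
end
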